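/- With the notation of the previous lemma (a₁,…,a_k positive rationals, S_i the semigroup generated by 1, a₁,…,a_i, G_i the generated group, q_i = [G_i : G_{i−1}], x_i = (q₁−1)a₁+⋯+(q_i−1)a_i): for every real x > x_i, one has S_i ∩ [x−1, ∞) = G_i ∩ [x−1, ∞) and |S_i ∩ [x−1, x)| = q₁⋯q_i. -/

import Mathlib

/-!
Adjoining `aᵢ₊₁` gives `Gᵢ₊₁ = Gᵢ + ℤ aᵢ₊₁`, and `qᵢ₊₁ aᵢ₊₁ ∈ Gᵢ` because `qᵢ₊₁` is the order of the
quotient `Gᵢ₊₁ / Gᵢ`. Hence every `r ∈ Gᵢ₊₁` is `g + τ aᵢ₊₁` with `g ∈ Gᵢ` and `0 ≤ τ < qᵢ₊₁`; if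
`r > xᵢ₊₁ - 1 = xᵢ - 1 + (qᵢ₊₁ - 1) aᵢ₊₁` then `g > xᵢ - 1`, so `g ∈ Sᵢ` by induction (starting from
`G₀ = ℤ`, `S₀ = ℕ`) and `r ∈ Sᵢ₊₁`. Above `x - 1` the set `Sᵢ` therefore agrees with `Gᵢ ⊇ ℤ`, and
`Gᵢ ∩ [x - 1, x)` is a set of representatives of `Gᵢ / ℤ`, which has `[Gᵢ : G₀] = q₁⋯qᵢ` elements.
-/

open AddSubgroup

section AddCommGroup

variable {G : Type*} [AddCommGroup G] {H : AddSubgroup G} {A : G}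

lemma exists_nsmul_sub_mem_of_mem_sup_zmultiples {n : ℕ} (hn : n ≠ 0) (hnA : n • A ∈ H)
    {r : G} (hr : r ∈ H ⊔ zmultiples A) : ∃ τ < n, r - τ • A ∈ H := by
  obtain ⟨h, hh, _, ⟨m, rfl⟩, rfl⟩ := mem_sup.1 hr
  have hmod : 0 ≤ m % n := Int.emod_nonneg m (by omega)
  have hmod' : m % n < n := Int.emod_lt_of_pos m (by omega)
  refine ⟨(m % n).toNat, by omega, ?_⟩
  have hsplit : h + m • A - (m % n).toNat • A = h + (m / n) • (n • A) := by
    have hdiv : m - m % n = m / n * n := by rw [Int.emod_def]; ring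
    rw [← natCast_zsmul, Int.toNat_of_nonneg hmod, ← natCast_zsmul, smul_smul, ← hdiv,
      sub_zsmul]
    abel
  rw [hsplit]
  exact add_mem hh (zsmul_mem hnA _)

lemma relIndex_sup_zmultiples_ne_zero {n : ℕ} (hn : n ≠ 0) (hnA : n • A ∈ H) :
    H.relIndex (H ⊔ zmultiples A) ≠ 0 := by
  set K := H ⊔ zmultiples A
  have hAK : A ∈ K := mem_sup_right (mem_zmultiples A)
  have : Finite (K ⧸ H.addSubgroupOf K) := by
    refine Finite.of_surjective
      (fun τ : Fin n => (QuotientAddGroup.mk (⟨(τ : ℕ) • A, nsmul_mem hAK τ⟩ : K) : K ⧸ _)) ?_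
    rintro ⟨r, hr⟩
    obtain ⟨τ, hτn, hτH⟩ := exists_nsmul_sub_mem_of_mem_sup_zmultiples hn hnA hr
    refine ⟨⟨τ, hτn⟩, QuotientAddGroup.eq.2 ?_⟩
    rw [mem_addSubgroupOf]
    simpa [neg_add_eq_sub] using hτH
  exact index_ne_zero_of_finite

end AddCommGroup

section Chain

variable {G : Type*} [AddGroup G] {H : ℕ → AddSubgroup G}

lemma relIndex_eq_prod_relIndex_of_monotone (hH : Monotone H) (i : ℕ) :
    (H 0).relIndex (H i) = ∏ j ∈ Finset.Icc 1 i, (H (j - 1)).relIndex (H j) := by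
  induction i with
  | zero => simp
  | succ i ih =>
    rw [Finset.prod_Icc_succ_top (by omega), ← ih, Nat.add_sub_cancel,
      relIndex_mul_relIndex _ _ _ (hH (Nat.zero_le i)) (hH i.le_succ)]

lemma relIndex_zero_ne_zero_of_forall_succ (hH : ∀ i, (H i).relIndex (H (i + 1)) ≠ 0) (i : ℕ) :
    (H 0).relIndex (H i) ≠ 0 := by
  induction i with
  | zero => simp
  | succ i ih => exact relIndex_ne_zero_trans ih (hH i)

end Chain

section Closure

variable {M : Type*} [AddGroup M]

lemma closure_addSubmonoidClosure (s : Set M) :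
    AddSubgroup.closure (AddSubmonoid.closure s : Set M) = AddSubgroup.closure s :=
  le_antisymm ((closure_le _).2 (le_closure_toAddSubmonoid s))
    (closure_mono AddSubmonoid.subset_closure)

lemma closure_union_image_Icc_zero (s : Set M) (a : ℕ → M) :
    AddSubgroup.closure (s ∪ a '' {j | 1 ≤ j ∧ j ≤ 0}) = AddSubgroup.closure s := by
  have hIcc : {j : ℕ | 1 ≤ j ∧ j ≤ 0} = ∅ :=
    Set.eq_empty_of_forall_notMem fun j ⟨h1, h2⟩ => by omega
  rw [hIcc, Set.image_empty, Set.union_empty]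

lemma closure_union_image_Icc_succ (s : Set M) (a : ℕ → M) (i : ℕ) :
    AddSubgroup.closure (s ∪ a '' {j | 1 ≤ j ∧ j ≤ i + 1}) =
      AddSubgroup.closure (s ∪ a '' {j | 1 ≤ j ∧ j ≤ i}) ⊔ zmultiples (a (i + 1)) := by
  have hIcc : {j : ℕ | 1 ≤ j ∧ j ≤ i + 1} = insert (i + 1) {j | 1 ≤ j ∧ j ≤ i} := by
    ext j
    simp only [Set.mem_ofPred_eq, Set.mem_insert_iff]
    omega
  rw [hIcc, Set.image_insert_eq, Set.union_insert, Set.insert_eq, AddSubgroup.closure_union,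
    sup_comm, zmultiples_eq_closure]

end Closure

section OrderedRing

variable {F : Type*} [CommRing F] [LinearOrder F] [IsStrictOrderedRing F]

lemma mem_of_neg_one_lt {T : AddSubmonoid F} (hT : (1 : F) ∈ T) {r : F}
    (hr : r ∈ zmultiples (1 : F)) (h : -1 < r) : r ∈ T := by
  obtain ⟨n, rfl⟩ := mem_zmultiples_iff.1 hr
  have hn : 0 ≤ n := by
    have : (-1 : ℤ) < n := by exact_mod_cast (by simpa using h : (-1 : F) < n)
    omega
  lift n to ℕ using hn
  rw [natCast_zsmul]
  exact nsmul_mem hT n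

lemma mem_of_lt_of_mem_sup_zmultiples {H : AddSubgroup F} {T U : AddSubmonoid F} {A c r : F}
    (hA : 0 < A) (hAU : A ∈ U) (hTU : T ≤ U) (hd : H.relIndex (H ⊔ zmultiples A) ≠ 0)
    (hT : ∀ s ∈ H, c < s → s ∈ T) (hr : r ∈ H ⊔ zmultiples A)
    (hcr : c + ((H.relIndex (H ⊔ zmultiples A) : F) - 1) * A < r) : r ∈ U := by
  set d := H.relIndex (H ⊔ zmultiples A)
  obtain ⟨τ, hτd, hτH⟩ := exists_nsmul_sub_mem_of_mem_sup_zmultiples hd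
    (nsmul_relIndex_mem H (mem_sup_right (mem_zmultiples A))) hr
  have hτ : (τ : F) ≤ d - 1 := by
    rw [le_sub_iff_add_le]
    exact_mod_cast hτd
  have hτT : r - τ • A ∈ T :=
    hT _ hτH (by rw [nsmul_eq_mul]; linarith [mul_le_mul_of_nonneg_right hτ hA.le])
  simpa using U.add_mem (hTU hτT) (U.nsmul_mem hAU τ)

lemma mem_of_mem_of_sub_one_lt {k : ℕ} {a x : ℕ → F} {S : ℕ → AddSubmonoid F}
    {G : ℕ → AddSubgroup F} (ha : ∀ i < k, 0 < a (i + 1)) (hS0 : (1 : F) ∈ S 0)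
    (hSmono : ∀ i, S i ≤ S (i + 1)) (haS : ∀ i, a (i + 1) ∈ S (i + 1))
    (hG0 : G 0 = zmultiples 1) (hGsucc : ∀ i, G (i + 1) = G i ⊔ zmultiples (a (i + 1)))
    (hfin : ∀ i, (G i).relIndex (G (i + 1)) ≠ 0) (hx0 : x 0 = 0)
    (hxsucc : ∀ i, x (i + 1) = x i + (((G i).relIndex (G (i + 1)) : F) - 1) * a (i + 1)) :
    ∀ i ≤ k, ∀ r ∈ G i, x i - 1 < r → r ∈ S i := by
  intro i hik r hr hxr
  induction i generalizing r with
  | zero => exact mem_of_neg_one_lt hS0 (hG0 ▸ hr) (by simpa [hx0] using hxr)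
  | succ i ih =>
    have hd := hfin i
    have hxi := hxsucc i
    rw [hGsucc] at hr hd hxi
    exact mem_of_lt_of_mem_sup_zmultiples (ha i hik) (haS i) (hSmono i) hd (ih (by omega)) hr
      (by linarith)

end OrderedRing

lemma relIndex_sup_zmultiples_ne_zero_of_one_mem {H : AddSubgroup ℚ} (hH : (1 : ℚ) ∈ H)
    (A : ℚ) : H.relIndex (H ⊔ zmultiples A) ≠ 0 :=
  relIndex_sup_zmultiples_ne_zero A.den_nz <| by
    rw [nsmul_eq_mul, Rat.den_mul_eq_num, ← zsmul_one]
    exact zsmul_mem hH _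

lemma encard_inter_Ico_eq_relIndex {K : AddSubgroup ℚ} (hK : zmultiples (1 : ℚ) ≤ K)
    (hfin : (zmultiples (1 : ℚ)).relIndex K ≠ 0) (y : ℝ) :
    ((K : Set ℚ) ∩ {r : ℚ | y - 1 ≤ (r : ℝ) ∧ (r : ℝ) < y}).encard =
      (zmultiples (1 : ℚ)).relIndex K := by
  set Z := zmultiples (1 : ℚ)
  have : Finite (K ⧸ Z.addSubgroupOf K) := @finite_quotient_of_finiteIndex _ _ _ ⟨hfin⟩
  have hIco (r : ℚ) : y - 1 ≤ (r : ℝ) ∧ (r : ℝ) < y ↔ (r : ℝ) ∈ Set.Ico (y - 1) (y - 1 + 1) := by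
    simp
  let f : ((K : Set ℚ) ∩ {r : ℚ | y - 1 ≤ (r : ℝ) ∧ (r : ℝ) < y} : Set ℚ) →
      K ⧸ Z.addSubgroupOf K :=
    fun r => QuotientAddGroup.mk ⟨r, r.2.1⟩
  have hf : Function.Bijective f := by
    constructor
    · rintro ⟨r, hrK, hr⟩ ⟨s, hsK, hs⟩ hrs
      obtain ⟨n, hn⟩ := mem_zmultiples_iff.1 (mem_addSubgroupOf.1 (QuotientAddGroup.eq.1 hrs))
      have hsr : (s : ℝ) = r + n • (1 : ℝ) := by
        have : (s : ℚ) = r + n := by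
          simp only [zsmul_one, AddSubgroup.coe_add, AddSubgroup.coe_neg] at hn
          linarith
        simp [this]
      obtain ⟨m, -, huniq⟩ := existsUnique_add_zsmul_mem_Ico zero_lt_one (r : ℝ) (y - 1)
      have h0 := huniq 0 (by simpa using (hIco r).1 hr)
      have hn0 := huniq n (show (r : ℝ) + n • 1 ∈ _ by rw [← hsr]; exact (hIco s).1 hs)
      obtain rfl : n = 0 := hn0.trans h0.symm
      exact Subtype.ext (by simpa using hsr.symm)
    · rintro ⟨⟨k, hk⟩⟩
      obtain ⟨n, hn, -⟩ := existsUnique_add_zsmul_mem_Ico zero_lt_one (k : ℝ) (y - 1)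
      refine ⟨⟨k + n, add_mem hk (hK ⟨n, by simp⟩), (hIco _).2 (by simpa using hn)⟩,
        QuotientAddGroup.eq.2 ?_⟩
      rw [mem_addSubgroupOf]
      exact ⟨-n, by simp⟩
  rw [Set.encard, ENat.card_congr (Equiv.ofBijective f hf), ENat.card_eq_coe_natCard]
  rfl

/-- **Lemma (density), second part.** With the same notation, for every real `x > x_i` one has
`S_i ∩ [x-1, ∞) = G_i ∩ [x-1, ∞)` (as sets of rationals) and `|S_i ∩ [x-1, x)| = q₁⋯q_i`. -/
theorem density_lemma_tail
    (k : ℕ) (a : ℕ → ℚ) (ha : ∀ i, 1 ≤ i → i ≤ k → 0 < a i)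
    (S : ℕ → AddSubmonoid ℚ)
    (hS : ∀ i, S i = AddSubmonoid.closure ({1} ∪ (a '' {j | 1 ≤ j ∧ j ≤ i})))
    (G : ℕ → AddSubgroup ℚ)
    (hG : ∀ i, G i = AddSubgroup.closure (S i : Set ℚ))
    (q : ℕ → ℕ) (hq : ∀ i, 1 ≤ i → q i = (G (i - 1)).relIndex (G i))
    (x : ℕ → ℚ) (hx : ∀ i, x i = ∑ j ∈ Finset.Icc 1 i, ((q j : ℚ) - 1) * a j) :
    ∀ i, 1 ≤ i → i ≤ k → ∀ y : ℝ, (x i : ℝ) < y →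
      ((S i : Set ℚ) ∩ {r : ℚ | y - 1 ≤ (r : ℝ)} =
        (G i : Set ℚ) ∩ {r : ℚ | y - 1 ≤ (r : ℝ)}) ∧
      ((S i : Set ℚ) ∩ {r : ℚ | y - 1 ≤ (r : ℝ) ∧ (r : ℝ) < y}).encard =
        ((∏ j ∈ Finset.Icc 1 i, q j : ℕ) : ℕ∞) := by
  have hG0 : G 0 = zmultiples 1 := by
    rw [hG, hS, closure_addSubmonoidClosure, closure_union_image_Icc_zero, zmultiples_eq_closure]
  have hGsucc (i : ℕ) : G (i + 1) = G i ⊔ zmultiples (a (i + 1)) := by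
    rw [hG, hG, hS, hS, closure_addSubmonoidClosure, closure_addSubmonoidClosure,
      closure_union_image_Icc_succ]
  have hGmono : Monotone G := monotone_nat_of_le_succ fun i => hGsucc i ▸ le_sup_left
  have hfin (i : ℕ) : (G i).relIndex (G (i + 1)) ≠ 0 := hGsucc i ▸
    relIndex_sup_zmultiples_ne_zero_of_one_mem (hGmono (Nat.zero_le i) (hG0 ▸ mem_zmultiples 1)) _
  have htail := mem_of_mem_of_sub_one_lt (k := k) (x := x) (S := S) (G := G)
    (fun i hi => ha (i + 1) (by omega) hi) (hS 0 ▸ AddSubmonoid.subset_closure (Or.inl rfl))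
    (fun i => hS i ▸ hS (i + 1) ▸ AddSubmonoid.closure_mono (Set.union_subset_union_right _
      (Set.image_mono fun j hj => ⟨hj.1, hj.2.trans i.le_succ⟩)))
    (fun i => hS (i + 1) ▸ AddSubmonoid.subset_closure (Or.inr ⟨i + 1, ⟨by omega, le_rfl⟩, rfl⟩))
    hG0 hGsucc hfin (by simp [hx])
    (fun i => by rw [hx, hx, Finset.sum_Icc_succ_top (by omega), hq (i + 1) (by omega)]; rfl)
  intro i _ hik y hy
  have hinter {P : ℚ → Prop} (hP : ∀ r, P r → y - 1 ≤ (r : ℝ)) :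
      (S i : Set ℚ) ∩ {r | P r} = (G i : Set ℚ) ∩ {r | P r} := by
    refine Set.inter_eq_inter_iff_right.2 ⟨fun r ⟨hrG, hr⟩ => htail i hik r hrG ?_,
      fun r ⟨hrS, _⟩ => hG i ▸ subset_closure hrS⟩
    exact_mod_cast (by linarith [hP r hr] : ((x i : ℝ) - 1) < r)
  refine ⟨hinter fun _ h => h, ?_⟩
  rw [hinter fun _ h => h.1, encard_inter_Ico_eq_relIndex (hG0 ▸ hGmono (Nat.zero_le i))
    (hG0 ▸ relIndex_zero_ne_zero_of_forall_succ hfin i), ← hG0,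
    relIndex_eq_prod_relIndex_of_monotone hGmono]
  exact_mod_cast Finset.prod_congr rfl fun j hj => (hq j (Finset.mem_Icc.1 hj).1).symm
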